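/- arXiv:1106.2428 — 2 statements merged into one kernel-verified Lean document; each statement's English description precedes it below -/
import Mathlib

section
/- Let Γ be a symmetric n×n matrix over GF(3) with zero diagonal, and let C = Γ + ωI over GF(9), where ω is a primitive element with ω² = ω + 1. Then the GF(3)-row span of C is a self-orthogonal additive code with respect to the Hermitian trace inner product, i.e., any two rows of C (including a row with itself) have Hermitian trace inner product zero. -/
open scoped BigOperators

instance : Fact (Nat.Prime 3) := ⟨by norm_num⟩

abbrev F9 := GaloisField 3 2
abbrev F3 := ZMod 3

noncomputable def conj9 (x : F9) : F9 := x ^ 3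

noncomputable def tr9 (x : F9) : F9 := x + x ^ 3

noncomputable def herm {n : ℕ} (ω : F9) (u v : Fin n → F9) : F9 :=
  tr9 (ω ^ 2 * ∑ i, u i * conj9 (v i))

/-!
Write `φ` for the embedding of GF(3) and `A = Γ.map φ`. The entries of `A` are fixed by the
Frobenius `x ↦ x³` and `A` is symmetric, so the conjugate transpose of `C = A + ωI` is
`A + ω³I`; with `ω + ω³ = 1` and `ω⁴ = -1` the Gram matrix `C Cᴴ` is `Γ² + Γ - I` mapped by `φ`,
so all Hermitian products of rows lie in GF(3). Finally `tr(ω² c) = c (ω² + ω⁶) = 0` for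
`c ∈ GF(3)`, since `ω⁶ = ω⁴ω² = -ω²`.
-/

theorem map_zmod_pow_card {p : ℕ} [Fact p.Prime] {S : Type*} [Semiring S] (φ : ZMod p →+* S)
    (c : ZMod p) : φ c ^ p = φ c := by
  rw [← map_pow, ZMod.pow_card]

section CharThree

open scoped Matrix

variable {R : Type*} [CommRing R] [CharP R 3] {ω : R}

theorem add_pow_three_of_sq_eq_add_one (hω : ω ^ 2 = ω + 1) : ω + ω ^ 3 = 1 := by
  linear_combination (ω + 1) * hω + ω * CharP.ofNat_eq_zero R 3

theorem pow_four_of_sq_eq_add_one (hω : ω ^ 2 = ω + 1) : ω ^ 4 = -1 := by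
  linear_combination (ω ^ 2 + ω + 2) * hω + (ω + 1) * CharP.ofNat_eq_zero R 3

theorem sq_mul_add_pow_three_eq_zero (hω : ω ^ 2 = ω + 1) (φ : ZMod 3 →+* R) (c : ZMod 3) :
    ω ^ 2 * φ c + (ω ^ 2 * φ c) ^ 3 = 0 := by
  rw [mul_pow, map_zmod_pow_card]
  linear_combination ω ^ 2 * φ c * pow_four_of_sq_eq_add_one hω

theorem map_pow_three_map_zmod_three_add_smul_one {n : Type*} [DecidableEq n]
    (φ : ZMod 3 →+* R) (Γ : Matrix n n (ZMod 3)) (ω : R) :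
    (Γ.map φ + ω • (1 : Matrix n n R)).map (· ^ 3) = Γ.map φ + ω ^ 3 • (1 : Matrix n n R) := by
  ext i k
  by_cases h : i = k <;> simp [h, add_pow_char, map_zmod_pow_card]

theorem mul_transpose_add_smul_one_eq_map {n : Type*} [Fintype n] [DecidableEq n]
    (hω : ω ^ 2 = ω + 1) (φ : ZMod 3 →+* R) {Γ : Matrix n n (ZMod 3)} (hΓ : Γ.IsSymm) :
    (Γ.map φ + ω • (1 : Matrix n n R)) * (Γ.map φ + ω ^ 3 • (1 : Matrix n n R))ᵀ =
      (Γ * Γ + Γ - 1).map φ := by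
  set A := Γ.map φ
  have hT : Aᵀ = A := by rw [← Matrix.transpose_map, hΓ.eq]
  have hA : (Γ * Γ + Γ - 1).map φ = A * A + A - 1 := by
    simp only [A, ← RingHom.mapMatrix_apply, map_sub, map_add, map_mul, map_one]
  rw [hA, Matrix.transpose_add, hT, Matrix.transpose_smul, Matrix.transpose_one]
  calc (A + ω • 1) * (A + ω ^ 3 • 1) = A * A + (ω + ω ^ 3) • A + ω ^ 4 • 1 := by
        simp only [add_mul, mul_add, Matrix.mul_smul, Matrix.smul_mul, Matrix.mul_one,
          Matrix.one_mul, smul_smul]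
        module
    _ = A * A + A - 1 := by
        rw [add_pow_three_of_sq_eq_add_one hω, pow_four_of_sq_eq_add_one hω, one_smul, neg_smul,
          one_smul, sub_eq_add_neg]

end CharThree

open scoped Matrix in
theorem herm_eq_tr9_mul_apply {n : ℕ} (ω : F9) (M : Matrix (Fin n) (Fin n) F9) (j k : Fin n) :
    herm ω (M j) (M k) = tr9 (ω ^ 2 * (M * (M.map conj9)ᵀ) j k) := by
  simp only [herm, Matrix.mul_apply, Matrix.transpose_apply, Matrix.map_apply]

theorem standard_form_selforthogonal_general {n : ℕ} (ω : F9) (hω : ω ^ 2 = ω + 1)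
    (Γ : Matrix (Fin n) (Fin n) F3)
    (hsymm : Γ.IsSymm) :
    let M : Matrix (Fin n) (Fin n) F9 :=
      Γ.map (algebraMap F3 F9) + ω • (1 : Matrix (Fin n) (Fin n) F9)
    ∀ j k, herm ω (M j) (M k) = 0 := by
  intro M j k
  have hconj : M.map conj9 = Γ.map (algebraMap F3 F9) + ω ^ 3 • 1 :=
    map_pow_three_map_zmod_three_add_smul_one _ Γ ω
  rw [herm_eq_tr9_mul_apply, hconj, mul_transpose_add_smul_one_eq_map hω _ hsymm, tr9]
  exact sq_mul_add_pow_three_eq_zero hω (algebraMap F3 F9) _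

/-- If `Γ` is a symmetric matrix over GF(3) with zero diagonal, then any two
rows of `C = Γ + ωI` (including a row with itself) have Hermitian trace inner
product zero: the row span of `C` is self-orthogonal. -/
theorem standard_form_selforthogonal {n : ℕ} (ω : F9) (hω : ω ^ 2 = ω + 1)
    (Γ : Matrix (Fin n) (Fin n) F3)
    (hsymm : Γ.IsSymm) (hdiag : ∀ j, Γ j j = 0) :
    let M : Matrix (Fin n) (Fin n) F9 :=
      Γ.map (algebraMap F3 F9) + ω • (1 : Matrix (Fin n) (Fin n) F9)
    ∀ j k, herm ω (M j) (M k) = 0 :=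
  standard_form_selforthogonal_general ω hω Γ hsymm
end

section
/- Let Γ be a symmetric n×n matrix over GF(3) with zero diagonal and C = Γ + ωI over GF(9). Then the rows of C are linearly independent over GF(3), so the GF(3)-span of the rows of C has exactly 3^n elements; consequently the code generated by C is self-dual with respect to the Hermitian trace inner product. -/
open scoped BigOperators

/-!
Because `Γ` is symmetric, the Gram matrix `M · (M̄)ᵀ = Γ² + (ω + ω³) Γ + ω⁴ = Γ² + Γ - 1` has
entries `a ∈ F3`, and `tr (ω² a) = a · tr (ω²) = 0`; so the rows of `M` are pairwise orthogonal.
The Hermitian trace form is `F3`-bilinear, nondegenerate (the trace form of `F9/F3` is), and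
skew-symmetric since `conj ω² = -ω²`. The rows are `F3`-independent because `1, ω` are, so
they span an `n`-dimensional self-orthogonal subspace of the `2n`-dimensional space `F9ⁿ`,
which therefore equals its orthogonal.
-/

open Module
open scoped Matrix

theorem linearIndependent_rows_map_add_smul_one {K L ι : Type*} [CommRing K] [CommRing L]
    [Algebra K L] [Fintype ι] [DecidableEq ι] (Γ : Matrix ι ι K) {ω : L}
    (hω : LinearIndependent K ![1, ω]) :
    LinearIndependent K fun j => (Γ.map (algebraMap K L) + ω • 1) j := by
  rw [Fintype.linearIndependent_iff]
  intro g hg i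
  have hgi := congrFun hg i
  simp only [Finset.sum_apply, Pi.smul_apply, Matrix.add_apply, Matrix.map_apply,
    Matrix.smul_apply, Matrix.one_apply, smul_add, Finset.sum_add_distrib, smul_ite,
    smul_zero, Finset.sum_ite_eq', Finset.mem_univ, if_true, Pi.zero_apply] at hgi
  refine (LinearIndependent.pair_iff.1 hω (∑ j, g j * Γ j i) (g i) ?_).2
  simpa [Algebra.smul_def, Finset.sum_apply, mul_comm] using hgi

theorem Submodule.natCard_span_of_linearIndependent {K V ι : Type*} [Ring K] [AddCommGroup V]
    [Module K V] [Fintype ι] {v : ι → V} (hv : LinearIndependent K v) :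
    Nat.card (span K (Set.range v)) = Nat.card K ^ Fintype.card ι := by
  rw [Nat.card_congr (Basis.span hv).equivFun.toEquiv, Nat.card_fun,
    Nat.card_eq_fintype_card (α := ι)]

namespace LinearMap.BilinForm

variable {K V : Type*} [Field K] [AddCommGroup V] [Module K V] {B : LinearMap.BilinForm K V}

theorem span_range_le_orthogonal {ι : Type*} {v : ι → V} (h : ∀ j k, B (v j) (v k) = 0) :
    Submodule.span K (Set.range v) ≤ B.orthogonal (Submodule.span K (Set.range v)) := by
  rw [Submodule.span_le]
  rintro _ ⟨k, rfl⟩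
  refine mem_orthogonal_iff.2 fun c hc => ?_
  have hker : Submodule.span K (Set.range v) ≤ LinearMap.ker (B.flip (v k)) := by
    rw [Submodule.span_le]
    rintro _ ⟨j, rfl⟩
    exact h j k
  exact hker hc

theorem orthogonal_eq_self_of_le [FiniteDimensional K V] (hB : B.Nondegenerate)
    {C : Submodule K V} (hC : C ≤ B.orthogonal C) (hdim : 2 * finrank K C = finrank K V) :
    B.orthogonal C = C :=
  (Submodule.eq_of_le_of_finrank_le hC (by rw [finrank_orthogonal hB]; omega)).symm

end LinearMap.BilinForm

namespace F9

lemma three_eq_zero : (3 : F9) = 0 := CharP.cast_eq_zero F9 3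

lemma finrank_eq_two : finrank F3 F9 = 2 := GaloisField.finrank 3 two_ne_zero

lemma pow_nine (x : F9) : x ^ 9 = x := by
  have hcard : Nat.card F9 = 9 := GaloisField.card 3 2 two_ne_zero
  have := Fintype.ofFinite F9
  have h := FiniteField.pow_card x
  rwa [Fintype.card_eq_nat_card, hcard] at h

lemma conj9_conj9 (x : F9) : conj9 (conj9 x) = x := by
  rw [conj9, conj9, ← pow_mul, pow_nine]

noncomputable def frob : F9 ≃ₐ[F3] F9 := FiniteField.frobeniusAlgEquivOfAlgebraic F3 F9

lemma frob_apply (x : F9) : frob x = conj9 x := by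
  simp [frob, conj9, ZMod.card]

lemma algebraMap_trace (x : F9) : algebraMap F3 F9 (Algebra.trace F3 F9 x) = tr9 x := by
  rw [FiniteField.algebraMap_trace_eq_sum_pow, finrank_eq_two, Nat.card_zmod]
  simp [Finset.sum_range_succ, tr9]

lemma trace_conj9 (x : F9) : Algebra.trace F3 F9 (conj9 x) = Algebra.trace F3 F9 x := by
  rw [← frob_apply, Algebra.trace_eq_of_algEquiv]

variable {ω : F9} (hω : ω ^ 2 = ω + 1)
include hω

lemma ne_zero_of_sq_eq : ω ≠ 0 := by
  rintro rfl
  norm_num at hω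

lemma linearIndependent_one_omega : LinearIndependent F3 ![1, ω] := by
  refine (LinearIndependent.pair_iff' one_ne_zero).2 fun a ha => ?_
  have hroot : a ^ 2 = a + 1 := by
    apply (algebraMap F3 F9).injective
    rw [← Algebra.algebraMap_eq_smul_one] at ha
    simp only [map_pow, map_add, map_one, ha, hω]
  exact (by decide : ∀ c : F3, c ^ 2 ≠ c + 1) a hroot

lemma pow_four_eq : ω ^ 4 = -1 := by
  linear_combination (ω ^ 2 + ω + 2) * hω + (ω + 1) * three_eq_zero

lemma pow_three_add_self : ω ^ 3 + ω = 1 := by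
  linear_combination (ω + 1) * hω + ω * three_eq_zero

lemma conj9_sq : conj9 (ω ^ 2) = - ω ^ 2 := by
  rw [conj9, ← pow_mul]; linear_combination ω ^ 2 * pow_four_eq hω

lemma trace_sq : Algebra.trace F3 F9 (ω ^ 2) = 0 := by
  apply (algebraMap F3 F9).injective
  rw [algebraMap_trace, tr9, map_zero, ← conj9, conj9_sq hω, add_neg_cancel]

end F9

/-- `herm ω` with values in `F3` rather than `F9`, so that Mathlib's bilinear forms apply. -/
noncomputable def hermTraceForm (n : ℕ) (ω : F9) : LinearMap.BilinForm F3 (Fin n → F9) :=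
  LinearMap.mk₂ F3 (fun u v => Algebra.trace F3 F9 (ω ^ 2 * ∑ i, u i * conj9 (v i)))
    (fun u u' v => by simp only [Pi.add_apply, add_mul, Finset.sum_add_distrib, mul_add, map_add])
    (fun a u v => by
      simp only [Pi.smul_apply, smul_mul_assoc, ← Finset.smul_sum, mul_smul_comm, map_smul])
    (fun u v v' => by
      simp only [Pi.add_apply, ← F9.frob_apply, map_add, mul_add, Finset.sum_add_distrib])
    (fun a u v => by
      simp only [Pi.smul_apply, ← F9.frob_apply, map_smul, mul_smul_comm, ← Finset.smul_sum])

section hermTraceForm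

variable {n : ℕ} {ω : F9}

lemma hermTraceForm_apply (u v : Fin n → F9) :
    hermTraceForm n ω u v = Algebra.trace F3 F9 (ω ^ 2 * ∑ i, u i * conj9 (v i)) := rfl

lemma algebraMap_hermTraceForm (u v : Fin n → F9) :
    algebraMap F3 F9 (hermTraceForm n ω u v) = herm ω u v :=
  F9.algebraMap_trace _

lemma herm_eq_zero_iff {u v : Fin n → F9} : herm ω u v = 0 ↔ hermTraceForm n ω u v = 0 := by
  rw [← algebraMap_hermTraceForm, map_eq_zero_iff _ (algebraMap F3 F9).injective]

variable (hω : ω ^ 2 = ω + 1)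
include hω

lemma hermTraceForm_swap (u v : Fin n → F9) :
    hermTraceForm n ω v u = -hermTraceForm n ω u v := by
  have hconj : conj9 (-ω ^ 2 * ∑ i, u i * conj9 (v i)) = ω ^ 2 * ∑ i, v i * conj9 (u i) := by
    simp only [← F9.frob_apply, map_mul, map_neg, map_sum]
    rw [F9.frob_apply, F9.conj9_sq hω, neg_neg]
    simp only [F9.frob_apply, F9.conj9_conj9, mul_comm (conj9 _)]
  rw [hermTraceForm_apply, hermTraceForm_apply, ← hconj, F9.trace_conj9, neg_mul, map_neg]

lemma hermTraceForm_isRefl : (hermTraceForm n ω).IsRefl := fun u v huv => by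
  rw [hermTraceForm_swap hω, huv, neg_zero]

lemma hermTraceForm_nondegenerate : (hermTraceForm n ω).Nondegenerate := by
  refine (hermTraceForm_isRefl hω).nondegenerate_iff_separatingLeft.2 fun u hu => ?_
  funext i
  have htrace : ∀ b, Algebra.traceForm F3 F9 (ω ^ 2 * u i) b = 0 := fun b => by
    have := hu (Pi.single i (conj9 b))
    rwa [hermTraceForm_apply, Finset.sum_eq_single i
      (fun j _ hj => by rw [Pi.single_eq_of_ne hj, conj9, zero_pow three_ne_zero, mul_zero])
      (by simp),
      Pi.single_eq_same, F9.conj9_conj9, ← mul_assoc] at this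
  have := (traceForm_nondegenerate F3 F9).1 _ htrace
  simpa [F9.ne_zero_of_sq_eq hω] using this

end hermTraceForm

lemma map_conj9_map_add_smul_one {n : ℕ} (Γ : Matrix (Fin n) (Fin n) F3) (ω : F9) :
    (Γ.map (algebraMap F3 F9) + ω • 1).map conj9 = Γ.map (algebraMap F3 F9) + conj9 ω • 1 := by
  ext j k
  simp only [← F9.frob_apply, Matrix.map_apply, Matrix.add_apply, Matrix.smul_apply,
    Matrix.one_apply, map_add, AlgEquiv.commutes]
  split_ifs <;> simp

section rows

variable {n : ℕ} {ω : F9} {Γ : Matrix (Fin n) (Fin n) F3}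

variable (hω : ω ^ 2 = ω + 1) (hsymm : Γ.IsSymm)
include hω hsymm

lemma mul_map_conj9_transpose :
    (Γ.map (algebraMap F3 F9) + ω • 1) * ((Γ.map (algebraMap F3 F9) + ω • 1).map conj9)ᵀ =
      (Γ * Γ + Γ - 1).map (algebraMap F3 F9) := by
  rw [map_conj9_map_add_smul_one, Matrix.transpose_add, Matrix.transpose_smul,
    Matrix.transpose_one, ← Matrix.transpose_map, hsymm.eq]
  have hφ : (Γ * Γ + Γ - 1).map (algebraMap F3 F9) =
      Γ.map (algebraMap F3 F9) * Γ.map (algebraMap F3 F9) + Γ.map (algebraMap F3 F9) - 1 := by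
    simp [Matrix.map_mul, Matrix.map_add, Matrix.map_sub, Matrix.map_one]
  have hcoef : ω + conj9 ω = 1 := by rw [conj9, add_comm]; exact F9.pow_three_add_self hω
  have hprod : conj9 ω * ω = -1 := by rw [conj9, ← pow_succ]; exact F9.pow_four_eq hω
  rw [hφ]
  simp only [add_mul, mul_add, Matrix.smul_mul, Matrix.mul_smul, Matrix.mul_one, Matrix.one_mul,
    smul_smul]
  linear_combination (norm := module)
    hcoef • Γ.map (algebraMap F3 F9) + hprod • (1 : Matrix (Fin n) (Fin n) F9)

lemma hermTraceForm_rows (j k : Fin n) :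
    hermTraceForm n ω ((Γ.map (algebraMap F3 F9) + ω • 1) j)
      ((Γ.map (algebraMap F3 F9) + ω • 1) k) = 0 := by
  have hgram := congrFun (congrFun (mul_map_conj9_transpose hω hsymm) j) k
  rw [Matrix.mul_apply] at hgram
  simp only [Matrix.transpose_apply, Matrix.map_apply] at hgram
  rw [hermTraceForm_apply, hgram, ← Algebra.commutes, ← Algebra.smul_def, map_smul,
    F9.trace_sq hω, smul_zero]

end rows

theorem standard_form_selfdual_general {n : ℕ} (ω : F9) (hω : ω ^ 2 = ω + 1)
    (Γ : Matrix (Fin n) (Fin n) F3)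
    (hsymm : Γ.IsSymm) :
    let M : Matrix (Fin n) (Fin n) F9 :=
      Γ.map (algebraMap F3 F9) + ω • (1 : Matrix (Fin n) (Fin n) F9)
    let C : Submodule F3 (Fin n → F9) :=
      Submodule.span F3 (Set.range fun j => M j)
    LinearIndependent F3 (fun j => M j) ∧
    Nat.card C = 3 ^ n ∧
    (∀ u : Fin n → F9, u ∈ C ↔ ∀ c ∈ C, herm ω u c = 0) := by
  intro M C
  have hli : LinearIndependent F3 fun j => M j :=
    linearIndependent_rows_map_add_smul_one Γ (F9.linearIndependent_one_omega hω)
  have hdim : 2 * finrank F3 C = finrank F3 (Fin n → F9) := by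
    rw [finrank_span_eq_card hli, Module.finrank_pi_fintype, F9.finrank_eq_two]
    simp [mul_comm]
  have hselfdual : (hermTraceForm n ω).orthogonal C = C :=
    LinearMap.BilinForm.orthogonal_eq_self_of_le (hermTraceForm_nondegenerate hω)
      (LinearMap.BilinForm.span_range_le_orthogonal (hermTraceForm_rows hω hsymm)) hdim
  refine ⟨hli, by simp [C, Submodule.natCard_span_of_linearIndependent hli], fun u => ?_⟩
  conv_lhs => rw [← hselfdual, LinearMap.BilinForm.mem_orthogonal_iff]
  simp only [herm_eq_zero_iff, hermTraceForm_swap hω _ u, neg_eq_zero]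

/-- For `Γ` symmetric over GF(3) with zero diagonal and `C = Γ + ωI`, the rows
of `C` are GF(3)-linearly independent, the GF(3)-span of the rows has exactly
`3 ^ n` elements, and the code generated by `C` is self-dual with respect to
the Hermitian trace inner product. -/
theorem standard_form_selfdual {n : ℕ} (ω : F9) (hω : ω ^ 2 = ω + 1)
    (Γ : Matrix (Fin n) (Fin n) F3)
    (hsymm : Γ.IsSymm) (hdiag : ∀ j, Γ j j = 0) :
    let M : Matrix (Fin n) (Fin n) F9 :=
      Γ.map (algebraMap F3 F9) + ω • (1 : Matrix (Fin n) (Fin n) F9)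
    let C : Submodule F3 (Fin n → F9) :=
      Submodule.span F3 (Set.range fun j => M j)
    LinearIndependent F3 (fun j => M j) ∧
    Nat.card C = 3 ^ n ∧
    (∀ u : Fin n → F9, u ∈ C ↔ ∀ c ∈ C, herm ω u c = 0) :=
  standard_form_selfdual_general ω hω Γ hsymm
end
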